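/- Suppose an exact iteration map satisfies a quadratic error bound ||q(p) - p*|| ≤ C ||p - p*||² for all p in a ball around p*, and an inexact iteration satisfies ||p^{k+1} - q(p^k)|| ≤ a ||p^k - q(p^k)|| with a < 1. Then for any ā ∈ (a,1), if ||p^0 - p*|| < min(ε, (ā - a)/((1+a)C)), the inexact iterates satisfy ||p^{k+1} - p*|| ≤ ā ||p^k - p*|| for all k, hence converge q-linearly to p*. -/
import Mathlib


/-- inexact iterations on top of a quadratically convergent exact map
converge q-linearly with any rate `ā ∈ (a,1)` from a sufficiently small ball. -/
theorem stmt_1 {E : Type*} [NormedAddCommGroup E]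
    (pstar : E) (C ε : ℝ) (hC : 0 < C) (hε : 0 < ε)
    (q : E → E)
    (hq : ∀ p : E, ‖p - pstar‖ ≤ ε → ‖q p - pstar‖ ≤ C * ‖p - pstar‖ ^ 2)
    (a abar : ℝ) (ha0 : 0 < a) (ha : a < abar) (habar : abar < 1)
    (p : ℕ → E)
    (hstep : ∀ k : ℕ, ‖p (k + 1) - q (p k)‖ ≤ a * ‖p k - q (p k)‖)
    (hinit : ‖p 0 - pstar‖ < min ε ((abar - a) / ((1 + a) * C))) :
    ∀ k : ℕ, ‖p (k + 1) - pstar‖ ≤ abar * ‖p k - pstar‖ := by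
  set δ := (abar - a) / ((1 + a) * C) with hδ
  have hδpos : 0 < δ := div_pos (by linarith) (by positivity)
  have key : ∀ k : ℕ, ‖p k - pstar‖ < min ε δ →
      ‖p (k + 1) - pstar‖ ≤ abar * ‖p k - pstar‖ := by
    intro k hk
    set r := ‖p k - pstar‖ with hr
    have hr0 : 0 ≤ r := norm_nonneg _
    have hrε : r ≤ ε := le_of_lt (lt_of_lt_of_le hk (min_le_left _ _))
    have hrδ : r < δ := lt_of_lt_of_le hk (min_le_right _ _)
    have hqk : ‖q (p k) - pstar‖ ≤ C * r ^ 2 := hq (p k) hrε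
    have h1 : ‖p k - q (p k)‖ ≤ r + C * r ^ 2 := by
      calc ‖p k - q (p k)‖ ≤ ‖p k - pstar‖ + ‖q (p k) - pstar‖ := by
            rw [show p k - q (p k) = (p k - pstar) - (q (p k) - pstar) by abel]
            exact norm_sub_le _ _
        _ ≤ r + C * r ^ 2 := by rw [← hr]; linarith
    have h2 : ‖p (k + 1) - pstar‖ ≤ a * (r + C * r ^ 2) + C * r ^ 2 := by
      calc ‖p (k + 1) - pstar‖
          ≤ ‖p (k + 1) - q (p k)‖ + ‖q (p k) - pstar‖ := by
            rw [show p (k+1) - pstar = (p (k+1) - q (p k)) + (q (p k) - pstar) by abel]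
            exact norm_add_le _ _
        _ ≤ a * ‖p k - q (p k)‖ + C * r ^ 2 := by linarith [hstep k]
        _ ≤ a * (r + C * r ^ 2) + C * r ^ 2 := by nlinarith [hstep k]
    have hrδ' : (1 + a) * C * r ≤ abar - a := by
      have := (lt_div_iff₀ (by positivity : (0:ℝ) < (1 + a) * C)).mp hrδ
      nlinarith
    calc ‖p (k + 1) - pstar‖ ≤ a * (r + C * r ^ 2) + C * r ^ 2 := h2
      _ = a * r + (1 + a) * C * r * r := by ring
      _ ≤ a * r + (abar - a) * r := by nlinarith
      _ = abar * r := by ring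
  have hsmall : ∀ k : ℕ, ‖p k - pstar‖ < min ε δ := by
    intro k
    induction k with
    | zero => exact hinit
    | succ n ih =>
      have h := key n ih
      have : abar * ‖p n - pstar‖ ≤ ‖p n - pstar‖ := by
        nlinarith [norm_nonneg (p n - pstar)]
      exact lt_of_le_of_lt (h.trans this) ih
  intro k
  exact key k (hsmall k)
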